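/- arXiv:1512.07205 — 4 statements merged into one kernel-verified Lean document; each statement's English description precedes it below -/
import Mathlib

section
/- Let R = ⊕_{m≥0} R_m be a graded ℂ-algebra with each R_m finite-dimensional, equipped with a good filtration 𝓕 (decreasing, multiplicative, linearly bounded ℝ-filtration). Suppose v₁ is a valuation on R (trivial on ℂ, centered at the irrelevant maximal ideal) such that for each k, 𝓕^x R_k = { f ∈ R_k : ∃ g ∈ R with v₁(g) ≥ x and the lowest-degree homogeneous component of g equals f } ∪ {0}. Then for every m ∈ ℝ, ∑_{k=0}^∞ dim_ℂ(R_k / 𝓕^m R_k) = dim_ℂ(R / 𝔞_m(v₁)), where 𝔞_m(v₁) = { f ∈ R : v₁(f) ≥ m }. -/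
/-- `IsInitial 𝒜 g f` says that `f` is the initial component `in(g)` of `g`, i.e. the
lowest-degree nonzero homogeneous component of `g` with respect to the grading `𝒜`. -/
def IsInitial {A : Type*} [CommRing A] [Algebra ℂ A]
    (𝒜 : ℕ → Submodule ℂ A) [GradedAlgebra 𝒜] (g f : A) : Prop :=
  f ≠ 0 ∧ ∃ k : ℕ, (DirectSum.decompose 𝒜 g k : A) = f ∧
    ∀ j < k, (DirectSum.decompose 𝒜 g j : A) = 0

section Aux
variable {A : Type*} [CommRing A] [Algebra ℂ A] (𝒜 : ℕ → Submodule ℂ A) [GradedAlgebra 𝒜]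

lemma decompose_apply_add' (a b : A) (k : ℕ) :
    (DirectSum.decompose 𝒜 (a + b) k : A) =
      (DirectSum.decompose 𝒜 a k : A) + (DirectSum.decompose 𝒜 b k : A) := by
  rw [DirectSum.decompose_add, DirectSum.add_apply, Submodule.coe_add]

lemma decompose_apply_sub' (a b : A) (k : ℕ) :
    (DirectSum.decompose 𝒜 (a - b) k : A) =
      (DirectSum.decompose 𝒜 a k : A) - (DirectSum.decompose 𝒜 b k : A) := by
  rw [DirectSum.decompose_sub, DirectSum.sub_apply, Submodule.coe_sub]

lemma eq_zero_of_forall_decompose' (a : A)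
    (h : ∀ k, (DirectSum.decompose 𝒜 a k : A) = 0) : a = 0 := by
  classical
  have hs := DirectSum.sum_support_decompose 𝒜 a
  rw [← hs]
  exact Finset.sum_eq_zero fun i _ => h i

lemma degree_unique' {f : A} {j k : ℕ} (hf : f ≠ 0) (hj : f ∈ 𝒜 j) (hk : f ∈ 𝒜 k) :
    j = k := by
  by_contra hne
  have h1 := DirectSum.decompose_of_mem_ne 𝒜 hj hne
  have h2 := DirectSum.decompose_of_mem_same 𝒜 hk
  exact hf (h2.symm.trans h1)

lemma exists_initial' (a : A) (ha : a ≠ 0) :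
    ∃ k, IsInitial 𝒜 a (DirectSum.decompose 𝒜 a k) := by
  classical
  have hne : ∃ k, (DirectSum.decompose 𝒜 a k : A) ≠ 0 := by
    by_contra h
    push_neg at h
    exact ha (eq_zero_of_forall_decompose' 𝒜 a h)
  refine ⟨Nat.find hne, Nat.find_spec hne, Nat.find hne, rfl, fun j hj => ?_⟩
  have := Nat.find_min hne hj
  simpa using this

end Aux

/-- Let `R = ⊕ R_k` be a graded `ℂ`-algebra with finite-dimensional pieces, and let `v₁`
be a valuation on `R` (trivial on `ℂ`, centered at the irrelevant maximal ideal,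
satisfying an Izumi-type bound `c₁·v₀ ≤ v₁ ≤ c₂·v₀` against the grading valuation
`v₀`).  Let `𝓕^x R_k = { f ∈ R_k : ∃ g, v₁(g) ≥ x, in(g) = f } ∪ {0}` be the associated
filtration and `𝔞_m(v₁) = { f : v₁(f) ≥ m }` the valuation ideal.  Then for every
`m ∈ ℝ`, `∑_k dim_ℂ (R_k / 𝓕^m R_k) = dim_ℂ (R / 𝔞_m(v₁))`. -/
theorem codim_sum_eq_codim_valuation_ideal
    {A : Type*} [CommRing A] [Algebra ℂ A]
    (𝒜 : ℕ → Submodule ℂ A) [GradedAlgebra 𝒜]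
    (hfd : ∀ k : ℕ, FiniteDimensional ℂ (𝒜 k))
    (v₁ : A → ℝ)
    (hv_mul : ∀ f g : A, f ≠ 0 → g ≠ 0 → v₁ (f * g) = v₁ f + v₁ g)
    (hv_add : ∀ f g : A, f + g ≠ 0 → min (v₁ f) (v₁ g) ≤ v₁ (f + g))
    (c₁ c₂ : ℝ) (hc₁ : 0 < c₁) (hc₁₂ : c₁ ≤ c₂)
    (hIzumi : ∀ (g f : A) (k : ℕ), IsInitial 𝒜 g f → f ∈ 𝒜 k →
      c₁ * k ≤ v₁ g ∧ v₁ g ≤ c₂ * k)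
    (𝓕 : ℝ → ℕ → Submodule ℂ A)
    (h𝓕 : ∀ (x : ℝ) (k : ℕ) (f : A), f ∈ 𝓕 x k ↔
      f = 0 ∨ (f ∈ 𝒜 k ∧ ∃ g : A, x ≤ v₁ g ∧ IsInitial 𝒜 g f))
    (m : ℝ)
    (𝔞 : Submodule ℂ A)
    (h𝔞 : ∀ f : A, f ∈ 𝔞 ↔ f = 0 ∨ m ≤ v₁ f) :
    ∑ᶠ k : ℕ, Module.finrank ℂ (↥(𝒜 k) ⧸ (𝓕 m k).comap (𝒜 k).subtype) =
      Module.finrank ℂ (A ⧸ 𝔞) := by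
  classical
  set q : ℕ → ℕ :=
    fun k => Module.finrank ℂ (↥(𝒜 k) ⧸ (𝓕 m k).comap (𝒜 k).subtype) with hq
  -- choose the cutoff degree
  obtain ⟨N, hN⟩ : ∃ N : ℕ, ∀ k : ℕ, N ≤ k → m ≤ c₁ * k := by
    refine ⟨⌈m / c₁⌉₊, fun k hk => ?_⟩
    have h1 : m / c₁ ≤ (k : ℝ) := le_trans (Nat.le_ceil _) (by exact_mod_cast hk)
    have := (div_le_iff₀ hc₁).mp h1
    linarith [this]
  -- every nonzero homogeneous element of degree ≥ N has valuation ≥ m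
  have hbig : ∀ k : ℕ, N ≤ k → ∀ f ∈ 𝒜 k, f ∈ 𝓕 m k := by
    intro k hk f hf
    rcases eq_or_ne f 0 with rfl | hf0
    · exact (h𝓕 m k 0).mpr (Or.inl rfl)
    · have hI : IsInitial 𝒜 f f :=
        ⟨hf0, k, DirectSum.decompose_of_mem_same 𝒜 hf,
          fun j hj => DirectSum.decompose_of_mem_ne 𝒜 hf hj.ne'⟩
      exact (h𝓕 m k f).mpr <| Or.inr ⟨hf, f,
        le_trans (hN k hk) (hIzumi f f k hI hf).1, hI⟩
  have hzero : ∀ k : ℕ, N ≤ k → q k = 0 := by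
    intro k hk
    have htop : (𝓕 m k).comap (𝒜 k).subtype = ⊤ :=
      eq_top_iff.mpr fun x _ => hbig k hk (x : A) x.2
    have : Subsingleton (↥(𝒜 k) ⧸ (𝓕 m k).comap (𝒜 k).subtype) :=
      Submodule.Quotient.subsingleton_iff.mpr htop
    exact Module.finrank_zero_of_subsingleton
  -- choose complements
  have hWex : ∀ k : ℕ, ∃ Wk : Submodule ℂ ↥(𝒜 k), IsCompl ((𝓕 m k).comap (𝒜 k).subtype) Wk :=
    fun k => Submodule.exists_isCompl _
  choose W hWc using hWex
  set W' : ℕ → Submodule ℂ A := fun k => (W k).map (𝒜 k).subtype with hW'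
  have hW'le : ∀ k, W' k ≤ 𝒜 k := fun k => Submodule.map_subtype_le _ _
  haveI hWfd : ∀ k, FiniteDimensional ℂ (W' k) := by
    intro k
    haveI := hfd k
    exact Submodule.finiteDimensional_of_le (hW'le k)
  have hqW : ∀ k, Module.finrank ℂ (W' k) = q k := by
    intro k
    haveI := hfd k
    have e1 : W' k ≃ₗ[ℂ] W k :=
      (Submodule.equivMapOfInjective (𝒜 k).subtype (Submodule.injective_subtype _) (W k)).symm
    have e2 : (↥(𝒜 k) ⧸ (𝓕 m k).comap (𝒜 k).subtype) ≃ₗ[ℂ] W k :=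
      Submodule.quotientEquivOfIsCompl _ _ (hWc k)
    rw [e1.finrank_eq, ← e2.finrank_eq]
  -- the partial sums of complements
  set S : ℕ → Submodule ℂ A := fun n => Nat.rec ⊥ (fun n Sn => Sn ⊔ W' n) n with hS
  have hS0 : S 0 = ⊥ := rfl
  have hSsucc : ∀ n, S (n + 1) = S n ⊔ W' n := fun n => rfl
  have hSmono : ∀ a b : ℕ, a ≤ b → S a ≤ S b := by
    intro a b hab
    induction b with
    | zero => simpa [Nat.le_zero.mp hab] using le_refl (S a)
    | succ b ih =>
      rcases Nat.lt_or_ge a (b + 1) with h | h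
      · exact le_trans (ih (by omega)) (by rw [hSsucc]; exact le_sup_left)
      · have : a = b + 1 := by omega
        subst this; exact le_refl _
  -- components of elements of S n
  have hComp : ∀ n, ∀ s ∈ S n, ∀ k,
      (DirectSum.decompose 𝒜 s k : A) ∈ W' k ∧
        (n ≤ k → (DirectSum.decompose 𝒜 s k : A) = 0) := by
    intro n
    induction n with
    | zero =>
      intro s hs k
      rw [hS0, Submodule.mem_bot] at hs
      subst hs
      refine ⟨?_, fun _ => ?_⟩ <;>
        simp [DirectSum.decompose_zero]
    | succ n ih =>
      intro s hs k
      rw [hSsucc, Submodule.mem_sup] at hs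
      obtain ⟨t, ht, w, hw, rfl⟩ := hs
      have hdec := decompose_apply_add' 𝒜 t w k
      by_cases hk : k = n
      · subst hk
        rw [hdec, (ih t ht k).2 le_rfl, zero_add,
          DirectSum.decompose_of_mem_same 𝒜 (hW'le k hw)]
        exact ⟨hw, fun h => absurd h (by omega)⟩
      · rw [hdec, DirectSum.decompose_of_mem_ne 𝒜 (hW'le n hw) (Ne.symm hk), add_zero]
        exact ⟨(ih t ht k).1, fun h => (ih t ht k).2 (by omega)⟩
  -- dimension of S n
  have hSfd : ∀ n, FiniteDimensional ℂ (S n) ∧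
      Module.finrank ℂ (S n) = ∑ k ∈ Finset.range n, q k := by
    intro n
    induction n with
    | zero =>
      rw [hS0]
      exact ⟨inferInstance, by simp⟩
    | succ n ih =>
      haveI := ih.1
      haveI := hWfd n
      have hdisjn : S n ⊓ W' n = ⊥ := by
        rw [eq_bot_iff]
        intro s hs
        have h1 := (hComp n s hs.1 n).2 le_rfl
        have h2 := DirectSum.decompose_of_mem_same 𝒜 (hW'le n hs.2)
        rw [Submodule.mem_bot]
        rw [h1] at h2
        exact h2.symm
      constructor
      · rw [hSsucc]; infer_instance
      · have := Submodule.finrank_sup_add_finrank_inf_eq (S n) (W' n)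
        rw [hdisjn] at this
        simp only [finrank_bot, add_zero] at this
        rw [hSsucc, this, ih.2, hqW n, Finset.sum_range_succ]
  -- 𝔞 and S N are disjoint
  have hdisj : Disjoint 𝔞 (S N) := by
    rw [Submodule.disjoint_def]
    intro s hs1 hs2
    by_contra hs0
    obtain ⟨k0, hI⟩ := exists_initial' 𝒜 s hs0
    have hm : m ≤ v₁ s := ((h𝔞 s).mp hs1).resolve_left hs0
    have hmem : (DirectSum.decompose 𝒜 s k0 : A) ∈ 𝓕 m k0 :=
      (h𝓕 m k0 _).mpr (Or.inr ⟨SetLike.coe_mem _, s, hm, hI⟩)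
    obtain ⟨x, hx, hxe⟩ := (hComp N s hs2 k0).1
    have hxF : x ∈ (𝓕 m k0).comap (𝒜 k0).subtype := by
      rw [Submodule.mem_comap, hxe]; exact hmem
    have hx0 : x = 0 :=
      (Submodule.disjoint_def.mp (hWc k0).disjoint) x hxF hx
    apply hI.1
    rw [← hxe, hx0]
    simp
  -- surjectivity: every element is congruent to an element of S N mod 𝔞
  have hsur : ∀ (i : ℕ) (f : A),
      (∀ j, j + i < N → (DirectSum.decompose 𝒜 f j : A) = 0) → f ∈ S N ⊔ 𝔞 := by
    intro i
    induction i with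
    | zero =>
      intro f hf
      rcases eq_or_ne f 0 with rfl | hf0
      · exact zero_mem _
      · obtain ⟨k0, hI⟩ := exists_initial' 𝒜 f hf0
        have hk0 : N ≤ k0 := by
          by_contra h
          push_neg at h
          exact hI.1 (hf k0 (by omega))
        have hv := (hIzumi f _ k0 hI (SetLike.coe_mem _)).1
        exact Submodule.mem_sup_right <|
          (h𝔞 f).mpr (Or.inr (le_trans (hN k0 hk0) hv))
    | succ i ih =>
      intro f hf
      by_cases hiN : N ≤ i
      · exact ih f fun j hj => absurd hj (by omega)
      push_neg at hiN
      set d := N - (i + 1) with hd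
      have hdN : d + (i + 1) = N := by omega
      by_cases h0 : (DirectSum.decompose 𝒜 f d : A) = 0
      · refine ih f fun j hj => ?_
        rcases eq_or_ne j d with rfl | hne
        · exact h0
        · exact hf j (by omega)
      · have hI : IsInitial 𝒜 f (DirectSum.decompose 𝒜 f d) :=
          ⟨h0, d, rfl, fun j hj => hf j (by omega)⟩
        have hmemsup : (DirectSum.decompose 𝒜 f d : ↥(𝒜 d)) ∈
            ((𝓕 m d).comap (𝒜 d).subtype) ⊔ W d := by
          rw [(hWc d).sup_eq_top]; exact Submodule.mem_top
        obtain ⟨u, hu, w, hw, huw⟩ := Submodule.mem_sup.mp hmemsup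
        have huF : (u : A) ∈ 𝓕 m d := hu
        have hg : ∃ g : A, g ∈ 𝔞 ∧ (∀ j < d, (DirectSum.decompose 𝒜 g j : A) = 0) ∧
            (DirectSum.decompose 𝒜 g d : A) = (u : A) := by
          rcases (h𝓕 m d (u : A)).mp huF with h | ⟨humem, g, hgv, hgI⟩
          · refine ⟨0, zero_mem _, ?_, ?_⟩
            · intro j _; simp [DirectSum.decompose_zero]
            · simp [DirectSum.decompose_zero, h]
          · obtain ⟨hu0, k', h1, h2⟩ := hgI
            have hk' : k' = d := by
              refine degree_unique' 𝒜 hu0 ?_ humem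
              rw [← h1]; exact SetLike.coe_mem _
            subst hk'
            exact ⟨g, (h𝔞 g).mpr (Or.inr hgv), h2, h1⟩
        obtain ⟨g, hga, hgj, hgd⟩ := hg
        set f' := f - (w : A) - g with hf'
        have hf'mem : ∀ j, j + i < N → (DirectSum.decompose 𝒜 f' j : A) = 0 := by
          intro j hj
          have hjd : j ≤ d := by omega
          have hdec : (DirectSum.decompose 𝒜 f' j : A) =
              (DirectSum.decompose 𝒜 f j : A) - (DirectSum.decompose 𝒜 (w : A) j : A) -
                (DirectSum.decompose 𝒜 g j : A) := by
            rw [hf', decompose_apply_sub', decompose_apply_sub']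
          rcases lt_or_eq_of_le hjd with hlt | heq
          · rw [hdec, hf j (by omega), hgj j hlt,
              DirectSum.decompose_of_mem_ne 𝒜 (SetLike.coe_mem w) (by omega : d ≠ j)]
            ring
          · have hcoe : (DirectSum.decompose 𝒜 f d : A) = (u : A) + (w : A) := by
              have := congrArg (Subtype.val) huw
              simpa using this.symm
            rw [hdec, heq, hgd, DirectSum.decompose_of_mem_same 𝒜 (SetLike.coe_mem w), hcoe]
            ring
        have hf'S := ih f' hf'mem
        have hfeq : f = f' + (w : A) + g := by rw [hf']; ring
        rw [hfeq]
        refine add_mem (add_mem hf'S ?_) (Submodule.mem_sup_right hga)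
        refine Submodule.mem_sup_left ?_
        have hdlt : d + 1 ≤ N := by omega
        exact hSmono (d + 1) N hdlt (by
          rw [hSsucc]
          exact Submodule.mem_sup_right ⟨w, hw, rfl⟩)
  have hcodis : Codisjoint 𝔞 (S N) := by
    rw [codisjoint_iff, eq_top_iff]
    intro f _
    have := hsur N f fun j hj => absurd hj (by omega)
    rwa [sup_comm] at this
  have hiso : (A ⧸ 𝔞) ≃ₗ[ℂ] S N :=
    Submodule.quotientEquivOfIsCompl 𝔞 (S N) ⟨hdisj, hcodis⟩
  have hsupp : (Function.support q) ⊆ ↑(Finset.range N) := by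
    intro k hk
    simp only [Finset.coe_range, Set.mem_Iio]
    by_contra h
    exact hk (hzero k (by omega))
  calc ∑ᶠ k : ℕ, q k = ∑ k ∈ Finset.range N, q k :=
        finsum_eq_sum_of_support_subset q hsupp
    _ = Module.finrank ℂ (S N) := (hSfd N).2.symm
    _ = Module.finrank ℂ (A ⧸ 𝔞) := hiso.finrank_eq.symm
end

section
/- Let 𝓕 be a good filtration on R = ⊕_{i≥0} R_i with dim_ℂ R_i = O(i^{n−1}), and suppose the limit vol(R^{(x)}) := lim_{k→∞} dim_ℂ 𝓕^{kx} R_k / (k^{n−1}/(n−1)!) exists for all x and equals the full volume L^{n−1} for x ≤ c₁ and is 0 for x large. Then for any α ≥ 0 and β > −c₁, lim_{p→∞} (n!/p^n) ∑_{i=0}^{⌊αp/(β+c₁)⌋} dim_ℂ(𝓕^{αp − βi} R_i) = n ∫_{c₁}^{∞} vol(R^{(x)}) · α^n/(β+x)^{n+1} dx. -/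
open Filter

open MeasureTheory Set

/-- Squeeze lemma: limit of `g (i p) (x p)` when `g k` are antitone, converge pointwise to `v`,
`v` is continuous at `x`, `i p → ∞` and `x p → x`. -/
lemma antitone_squeeze_aux {g : ℕ → ℝ → ℝ} {v : ℝ → ℝ}
    (hg : ∀ k, Antitone (g k))
    (hlim : ∀ y, Tendsto (fun k => g k y) atTop (nhds (v y)))
    {x : ℝ} (hcont : ContinuousAt v x) {ip : ℕ → ℕ} (hip : Tendsto ip atTop atTop)
    {xp : ℕ → ℝ} (hxp : Tendsto xp atTop (nhds x)) :
    Tendsto (fun p => g (ip p) (xp p)) atTop (nhds (v x)) := by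
  rw [Metric.tendsto_nhds]
  intro ε hε
  obtain ⟨δ, hδ, hδ'⟩ := Metric.continuousAt_iff.1 hcont (ε/2) (by linarith)
  set y₁ := x - δ/2 with hy₁
  set y₂ := x + δ/2 with hy₂
  have hd1 : dist y₁ x < δ := by
    rw [Real.dist_eq, hy₁]
    rw [show x - δ/2 - x = -(δ/2) by ring, abs_neg, abs_of_pos (by linarith)]
    linarith
  have hd2 : dist y₂ x < δ := by
    rw [Real.dist_eq, hy₂]
    rw [show x + δ/2 - x = δ/2 by ring, abs_of_pos (by linarith)]
    linarith
  have h1 : |v y₁ - v x| < ε/2 := by have := hδ' hd1; rwa [Real.dist_eq] at this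
  have h2 : |v y₂ - v x| < ε/2 := by have := hδ' hd2; rwa [Real.dist_eq] at this
  have e1 : ∀ᶠ p in atTop, dist (g (ip p) y₁) (v y₁) < ε/2 :=
    (Metric.tendsto_nhds.1 ((hlim y₁).comp hip)) (ε/2) (by linarith)
  have e2 : ∀ᶠ p in atTop, dist (g (ip p) y₂) (v y₂) < ε/2 :=
    (Metric.tendsto_nhds.1 ((hlim y₂).comp hip)) (ε/2) (by linarith)
  have e3 : ∀ᶠ p in atTop, dist (xp p) x < δ/2 := (Metric.tendsto_nhds.1 hxp) (δ/2) (by linarith)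
  filter_upwards [e1, e2, e3] with p hp1 hp2 hp3
  rw [Real.dist_eq] at hp1 hp2 hp3 ⊢
  have hb1 : y₁ ≤ xp p := by have := abs_lt.1 hp3; rw [hy₁]; linarith [this.1]
  have hb2 : xp p ≤ y₂ := by have := abs_lt.1 hp3; rw [hy₂]; linarith [this.2]
  have hg1 : g (ip p) (xp p) ≤ g (ip p) y₁ := hg _ hb1
  have hg2 : g (ip p) y₂ ≤ g (ip p) (xp p) := hg _ hb2
  have := abs_lt.1 hp1
  have := abs_lt.1 hp2
  have := abs_lt.1 h1
  have := abs_lt.1 h2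
  rw [abs_lt]
  constructor <;> linarith


/-- Summation formula: let `𝓕` be a good filtration on `R = ⊕ R_i` with
`dim R_i = O(i^{n−1})`, full for `x ≤ c₁·i`, and suppose
`vol(R^{(x)}) = lim_k dim 𝓕^{kx}R_k/(k^{n−1}/(n−1)!)` exists, equals the full volume `L`
for `x ≤ c₁` and vanishes for large `x`.  Then for `α ≥ 0` and `β > −c₁`,
`lim_p (n!/pⁿ) ∑_{i=0}^{⌊αp/(β+c₁)⌋} dim 𝓕^{αp−βi}R_i
  = n ∫_{c₁}^∞ vol(R^{(x)}) αⁿ/(β+x)^{n+1} dx`. -/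
theorem filtration_summation_formula (n : ℕ) (hn : 1 ≤ n) (c₁ : ℝ) (hc₁ : 0 < c₁)
    (dimR : ℕ → ℕ) (dimF : ℝ → ℕ → ℕ)
    (hle : ∀ (x : ℝ) (i : ℕ), dimF x i ≤ dimR i)
    (hanti : ∀ i : ℕ, Antitone fun x : ℝ => dimF x i)
    (hfull : ∀ (x : ℝ) (i : ℕ), x ≤ c₁ * i → dimF x i = dimR i)
    (C : ℝ) (hbound : ∀ i : ℕ, (dimR i : ℝ) ≤ C * (i : ℝ) ^ (n - 1))
    (vol : ℝ → ℝ) (L : ℝ)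
    (hvol : ∀ x : ℝ, Tendsto
      (fun k : ℕ => (dimF ((k : ℝ) * x) k : ℝ) / ((k : ℝ) ^ (n - 1) / (Nat.factorial (n - 1) : ℝ)))
      atTop (nhds (vol x)))
    (hvolfull : ∀ x : ℝ, x ≤ c₁ → vol x = L)
    (hvolzero : ∃ M : ℝ, ∀ x : ℝ, M ≤ x → vol x = 0)
    (α β : ℝ) (hα : 0 ≤ α) (hβ : -c₁ < β) :
    Tendsto (fun p : ℕ =>
        (Nat.factorial n : ℝ) / (p : ℝ) ^ n *
          ∑ i ∈ Finset.range (⌊α * (p : ℝ) / (β + c₁)⌋₊ + 1),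
            (dimF (α * (p : ℝ) - β * (i : ℝ)) i : ℝ))
      atTop
      (nhds (n * ∫ x in Set.Ioi c₁, vol x * α ^ n / (β + x) ^ (n + 1))) := by
  obtain ⟨m, rfl⟩ : ∃ m, n = m + 1 := ⟨n - 1, (Nat.succ_pred_eq_of_pos hn).symm⟩
  simp only [Nat.add_sub_cancel] at hbound hvol
  have hβc : (0:ℝ) < β + c₁ := by linarith
  -- trivial case α = 0
  rcases eq_or_lt_of_le hα with h0 | hαpos
  · subst h0
    simp only [zero_mul, zero_div, Nat.floor_zero, zero_add, Finset.range_one,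
      Finset.sum_singleton, Nat.cast_zero, mul_zero, zero_sub, neg_zero,
      zero_pow (Nat.succ_ne_zero m), zero_div, integral_zero, mul_zero]
    have h1 : Tendsto (fun p : ℕ => ((p:ℝ)^(m+1))⁻¹) atTop (nhds 0) :=
      tendsto_inv_atTop_zero.comp
        ((tendsto_pow_atTop (Nat.succ_ne_zero m)).comp tendsto_natCast_atTop_atTop)
    have h2 := h1.const_mul ((Nat.factorial (m+1) : ℝ) * (dimF 0 0 : ℝ))
    rw [mul_zero] at h2
    apply h2.congr
    intro p
    rw [div_eq_mul_inv]
    ring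
  clear hα
  set T := α / (β + c₁) with hTdef
  have hT : 0 < T := div_pos hαpos hβc
  set N : ℕ → ℕ := fun p => ⌊α * (p:ℝ) / (β + c₁)⌋₊ with hN
  have hTp : ∀ p : ℕ, α * (p:ℝ) / (β + c₁) = T * p := fun p => by rw [hTdef]; ring
  set g : ℕ → ℝ → ℝ := fun k y => (dimF ((k:ℝ) * y) k : ℝ) / ((k:ℝ) ^ m / (Nat.factorial m : ℝ))
    with hgdef
  have hganti : ∀ k, Antitone (g k) := by
    intro k x y hxy
    have h1 : (dimF ((k:ℝ)*y) k : ℝ) ≤ (dimF ((k:ℝ)*x) k : ℝ) := by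
      exact_mod_cast hanti k (mul_le_mul_of_nonneg_left hxy (by positivity))
    have h2 : (0:ℝ) ≤ (((k:ℝ)^m / (Nat.factorial m : ℝ)))⁻¹ := by positivity
    simp only [hgdef, div_eq_mul_inv]
    exact mul_le_mul_of_nonneg_right h1 h2
  have hvanti : Antitone vol := fun x y hxy =>
    le_of_tendsto_of_tendsto' (hvol y) (hvol x) fun k => hganti k hxy
  have hC : (0:ℝ) ≤ C := le_trans (Nat.cast_nonneg _) (by simpa using hbound 1)
  -- the step functions
  set F : ℕ → ℝ → ℝ := fun p => Set.indicator (Set.Ioc (0:ℝ) (((N p : ℝ) + 1)/p))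
      (fun t => ((Nat.factorial (m+1) : ℝ) / (p:ℝ)^(m+1) * p) *
        (dimF (α*(p:ℝ) - β*(⌊(p:ℝ)*t⌋₊ : ℝ)) ⌊(p:ℝ)*t⌋₊ : ℝ)) with hFdef
  -- the limit function
  set f : ℝ → ℝ := fun t => Set.indicator (Set.Ioo (0:ℝ) T)
      (fun t => ((m:ℝ)+1) * t^m * vol (α/t - β)) t with hfdef
  -- Claim A : sums equal integrals
  have claimA : ∀ p : ℕ, 1 ≤ p →
      (Nat.factorial (m+1) : ℝ) / (p : ℝ) ^ (m+1) *
          ∑ i ∈ Finset.range (N p + 1), (dimF (α * (p : ℝ) - β * (i : ℝ)) i : ℝ)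
        = ∫ t, F p t := by
    intro p hp
    have hp0 : (0:ℝ) < p := by exact_mod_cast hp
    have hpne : (p:ℝ) ≠ 0 := ne_of_gt hp0
    set body : ℝ → ℝ := fun t => (Nat.factorial (m+1) : ℝ)/(p:ℝ)^(m+1) * (p:ℝ) *
      (dimF (α*(p:ℝ) - β*((⌊(p:ℝ)*t⌋₊:ℕ):ℝ)) ⌊(p:ℝ)*t⌋₊ : ℝ) with hbody
    have key : ∀ i : ℕ, ∀ᵐ t : ℝ, t ∈ Set.uIoc (((i:ℕ):ℝ)/p) (((i+1:ℕ):ℝ)/p) →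
        body t = (Nat.factorial (m+1) : ℝ)/(p:ℝ)^(m+1) * (p:ℝ) *
          (dimF (α*(p:ℝ) - β*(i:ℝ)) i : ℝ) := by
      intro i
      have hle' : (((i:ℕ):ℝ))/p ≤ (((i+1:ℕ):ℝ))/p := by
        gcongr
        exact_mod_cast Nat.le_succ i
      have hne : ∀ᵐ t : ℝ, t ≠ (((i+1:ℕ):ℝ))/p := by
        rw [ae_iff]
        have he : {t : ℝ | ¬ t ≠ (((i+1:ℕ):ℝ))/p} = {(((i+1:ℕ):ℝ))/p} := by ext y; simp
        rw [he]
        exact measure_singleton _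
      filter_upwards [hne] with t htne hmem
      rw [Set.uIoc_of_le hle'] at hmem
      obtain ⟨h1, h2⟩ := hmem
      have ht0 : 0 < t := lt_of_le_of_lt (div_nonneg (Nat.cast_nonneg i) hp0.le) h1
      have hfl : ⌊(p:ℝ)*t⌋₊ = i := by
        rw [Nat.floor_eq_iff (mul_nonneg hp0.le ht0.le)]
        constructor
        · have h1' := (div_lt_iff₀ hp0).mp h1
          rw [mul_comm]
          linarith
        · have h2' : t < (((i+1:ℕ):ℝ))/p := lt_of_le_of_ne h2 htne
          have h2'' := (lt_div_iff₀ hp0).mp h2'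
          rw [mul_comm]
          push_cast at h2'' ⊢
          linarith
      rw [hbody]
      dsimp only
      rw [hfl]
    have hint : ∀ i : ℕ, IntervalIntegrable body volume (((i:ℕ):ℝ)/p) (((i+1:ℕ):ℝ)/p) := by
      intro i
      rw [intervalIntegrable_iff]
      have hfin : volume (Set.uIoc (((i:ℕ):ℝ)/p) (((i+1:ℕ):ℝ)/p)) < ⊤ := by
        rw [Set.uIoc]
        exact measure_Ioc_lt_top
      refine ((integrableOn_const (C := (Nat.factorial (m+1) : ℝ)/(p:ℝ)^(m+1) * (p:ℝ) *
        (dimF (α*(p:ℝ) - β*(i:ℝ)) i : ℝ)) hfin.ne)).congr ?_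
      rw [Filter.EventuallyEq, ae_restrict_iff' measurableSet_uIoc]
      exact (key i).mono fun t ht hmem => (ht hmem).symm
    have hval : ∀ i : ℕ, (∫ t in (((i:ℕ):ℝ)/p)..((((i+1:ℕ)):ℝ)/p), body t)
        = ((((i+1:ℕ):ℝ))/p - ((i:ℕ):ℝ)/p) • ((Nat.factorial (m+1) : ℝ)/(p:ℝ)^(m+1) * (p:ℝ) *
          (dimF (α*(p:ℝ) - β*(i:ℝ)) i : ℝ)) := by
      intro i
      rw [intervalIntegral.integral_congr_ae (key i), intervalIntegral.integral_const]
    calc (Nat.factorial (m+1) : ℝ) / (p : ℝ) ^ (m+1) *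
          ∑ i ∈ Finset.range (N p + 1), (dimF (α * (p : ℝ) - β * (i : ℝ)) i : ℝ)
        = ∑ i ∈ Finset.range (N p + 1),
            ∫ t in (((i:ℕ):ℝ)/p)..((((i+1:ℕ)):ℝ)/p), body t := by
          rw [Finset.mul_sum]
          apply Finset.sum_congr rfl
          intro i _
          rw [hval i, smul_eq_mul]
          push_cast
          field_simp
          ring
      _ = ∫ t in (((0:ℕ):ℝ)/p)..((((N p + 1:ℕ)):ℝ)/p), body t :=
          intervalIntegral.sum_integral_adjacent_intervals (fun k _ => hint k)
      _ = ∫ t in Set.Ioc (0:ℝ) (((N p:ℝ)+1)/p), body t := by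
          rw [show (((0:ℕ):ℝ))/p = 0 by norm_num,
            show ((((N p + 1:ℕ)):ℝ))/p = ((N p:ℝ)+1)/p by push_cast; ring]
          rw [intervalIntegral.integral_of_le (by positivity)]
      _ = ∫ t, F p t := (integral_indicator measurableSet_Ioc).symm
  -- Claim B : a.e. pointwise convergence
  have claimB : ∀ᵐ t : ℝ, Tendsto (fun p => F p t) atTop (nhds (f t)) := by
    have hDc : {y : ℝ | ¬ContinuousAt vol y}.Countable := hvanti.countable_not_continuousAt
    set E : Set ℝ := {0, T} ∪ ((fun y => α/(β+y)) '' {y : ℝ | ¬ContinuousAt vol y}) with hE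
    have hEc : E.Countable :=
      ((Set.countable_singleton T).insert 0).union (hDc.image _)
    have hE0 : volume E = 0 := hEc.measure_zero _
    have hgood : ∀ t : ℝ, t ∉ E → Tendsto (fun p => F p t) atTop (nhds (f t)) := by
      intro t htE
      have ht0' : t ≠ 0 := by
        rintro rfl
        exact htE (Or.inl (Set.mem_insert _ _))
      have htT' : t ≠ T := by
        rintro rfl
        exact htE (Or.inl (Set.mem_insert_of_mem _ rfl))
      rcases lt_or_gt_of_ne ht0' with hneg | hpos
      · -- t < 0 : everything vanishes
        have hf0 : f t = 0 := by
          rw [hfdef]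
          exact Set.indicator_of_notMem (fun hc => absurd hc.1 (by linarith)) _
        rw [hf0]
        apply Tendsto.congr' _ tendsto_const_nhds
        apply Eventually.of_forall
        intro p
        rw [hFdef]
        exact (Set.indicator_of_notMem (fun hc => absurd hc.1 (by linarith)) _).symm
      rcases lt_or_gt_of_ne htT' with hlt | hgt
      · -- main case : 0 < t < T
        have hxc : c₁ < α/t - β := by
          have h1 : α / T < α / t := (div_lt_div_iff_of_pos_left hαpos hT hpos).2 hlt
          have h2 : α / T = β + c₁ := by rw [hTdef]; field_simp
          linarith
        have hcont : ContinuousAt vol (α/t - β) := by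
          by_contra hc
          apply htE
          right
          refine ⟨α/t - β, hc, ?_⟩
          have hne : α/t ≠ 0 := by positivity
          field_simp
          rw [show β*t + (α - β*t) = α by ring]
          exact div_self (ne_of_gt hαpos)
        have hipTop : Tendsto (fun p : ℕ => ⌊(p:ℝ)*t⌋₊) atTop atTop :=
          tendsto_nat_floor_atTop.comp (Tendsto.atTop_mul_const hpos tendsto_natCast_atTop_atTop)
        have hratio : Tendsto (fun p : ℕ => ((⌊(p:ℝ)*t⌋₊:ℕ):ℝ)/p) atTop (nhds t) := by
          apply tendsto_of_tendsto_of_tendsto_of_le_of_le'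
            (g := fun p : ℕ => t - 1/(p:ℝ)) (h := fun _ : ℕ => t)
          · simpa using (tendsto_const_nhds (x := t)).sub tendsto_one_div_atTop_nhds_zero_nat
          · exact tendsto_const_nhds
          · filter_upwards [eventually_ge_atTop 1] with p hp
            have hp0 : (0:ℝ) < p := by exact_mod_cast hp
            rw [le_div_iff₀ hp0]
            have hlf := Nat.lt_floor_add_one ((p:ℝ)*t)
            have he : (t - 1/(p:ℝ))*p = (p:ℝ)*t - 1 := by field_simp
            linarith
          · filter_upwards [eventually_ge_atTop 1] with p hp
            have hp0 : (0:ℝ) < p := by exact_mod_cast hp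
            rw [div_le_iff₀ hp0]
            have hlf := Nat.floor_le (mul_nonneg hp0.le hpos.le)
            have hcm : t*(p:ℝ) = (p:ℝ)*t := mul_comm _ _
            linarith
        have hxptend : Tendsto (fun p : ℕ => α * (((⌊(p:ℝ)*t⌋₊:ℕ):ℝ)/p)⁻¹ - β) atTop
            (nhds (α/t - β)) := by
          have h1 : Tendsto (fun p : ℕ => (((⌊(p:ℝ)*t⌋₊:ℕ):ℝ)/p)⁻¹) atTop (nhds t⁻¹) :=
            hratio.inv₀ (ne_of_gt hpos)
          have h2 := (h1.const_mul α).sub_const β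
          have h3 : α/t - β = α * t⁻¹ - β := by rw [div_eq_mul_inv]
          rw [h3]
          exact h2
        have hsq := antitone_squeeze_aux hganti hvol hcont hipTop hxptend
        have hprod : Tendsto (fun p : ℕ =>
            ((m:ℝ)+1) * (((⌊(p:ℝ)*t⌋₊:ℕ):ℝ)/p)^m *
              g ⌊(p:ℝ)*t⌋₊ (α * (((⌊(p:ℝ)*t⌋₊:ℕ):ℝ)/p)⁻¹ - β))
            atTop (nhds (((m:ℝ)+1) * t^m * vol (α/t - β))) :=
          (tendsto_const_nhds.mul (hratio.pow m)).mul hsq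
        have hft : f t = ((m:ℝ)+1) * t^m * vol (α/t - β) := by
          rw [hfdef]
          exact Set.indicator_of_mem (Set.mem_Ioo.2 ⟨hpos, hlt⟩) _
        rw [hft]
        apply Tendsto.congr' _ hprod
        filter_upwards [hipTop.eventually_ge_atTop 1, eventually_ge_atTop 1] with p hip1 hp1
        have hp0 : (0:ℝ) < p := by exact_mod_cast hp1
        have hipr : (0:ℝ) < ((⌊(p:ℝ)*t⌋₊:ℕ):ℝ) := by exact_mod_cast hip1
        have hmem : t ∈ Set.Ioc (0:ℝ) (((N p:ℝ)+1)/p) := by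
          refine ⟨hpos, ?_⟩
          have h1 : T * p < (N p:ℝ) + 1 := by
            rw [hN]
            exact lt_of_eq_of_lt (hTp p).symm (Nat.lt_floor_add_one _)
          have h2 : T < ((N p:ℝ)+1)/p := by rw [lt_div_iff₀ hp0]; linarith
          linarith
        have hFt : F p t = (Nat.factorial (m+1) : ℝ)/(p:ℝ)^(m+1) * (p:ℝ) *
            (dimF (α*(p:ℝ) - β*((⌊(p:ℝ)*t⌋₊:ℕ):ℝ)) ⌊(p:ℝ)*t⌋₊ : ℝ) := by
          rw [hFdef]; exact Set.indicator_of_mem hmem _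
        rw [hFt]
        have harg : ((⌊(p:ℝ)*t⌋₊:ℕ):ℝ) * (α * (((⌊(p:ℝ)*t⌋₊:ℕ):ℝ)/p)⁻¹ - β)
            = α*(p:ℝ) - β*((⌊(p:ℝ)*t⌋₊:ℕ):ℝ) := by
          field_simp
        rw [hgdef]
        dsimp only
        rw [harg]
        rw [show (Nat.factorial (m+1) : ℝ) = ((m:ℝ)+1) * (Nat.factorial m : ℝ) by
          rw [Nat.factorial_succ]; push_cast; ring]
        field_simp
        have hpm : (p:ℝ)^m * (p:ℝ)⁻¹^m = 1 := by rw [← mul_pow, mul_inv_cancel₀ hp0.ne', one_pow]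
        linear_combination ((p:ℝ) * ((⌊(p:ℝ)*t⌋₊:ℕ):ℝ)^m * (dimF ((p:ℝ)*α - ((⌊(p:ℝ)*t⌋₊:ℕ):ℝ)*β) ⌊(p:ℝ)*t⌋₊ : ℝ)) * hpm
      · -- t > T : eventually zero
        have hf0 : f t = 0 := by
          rw [hfdef]
          exact Set.indicator_of_notMem (fun hc => absurd hc.2 (not_lt.2 hgt.le)) _
        rw [hf0]
        apply Tendsto.congr' _ tendsto_const_nhds
        have hev0 : ∀ᶠ p : ℕ in atTop, 1/(p:ℝ) < t - T :=
          tendsto_one_div_atTop_nhds_zero_nat.eventually_lt_const (by linarith)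
        filter_upwards [hev0, eventually_ge_atTop 1] with p hp1 hp2
        have hp0 : (0:ℝ) < p := by exact_mod_cast hp2
        have hNp : ((N p:ℝ)) ≤ T * p := by
          rw [hN]
          exact le_of_le_of_eq (Nat.floor_le (by positivity)) (hTp p)
        have h2 : ((N p:ℝ)+1)/p ≤ (T*(p:ℝ)+1)/p := by gcongr
        have h3 : (T*(p:ℝ)+1)/p = T + 1/p := by field_simp
        have hltt : ((N p:ℝ)+1)/p < t := by linarith
        rw [hFdef]
        exact (Set.indicator_of_notMem (fun hc => absurd hc.2 (not_le.2 hltt)) _).symm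
    rw [ae_iff]
    refine measure_mono_null ?_ hE0
    intro t ht
    simp only [Set.mem_setOf_eq] at ht
    by_contra htE
    exact ht (hgood t htE)
  -- DCT
  set bound : ℝ → ℝ := Set.indicator (Set.Ioc (0:ℝ) (T+1))
      (fun t => (Nat.factorial (m+1) : ℝ) * C * t^m) with hbdef
  have hFmeas : ∀ p : ℕ, AEStronglyMeasurable (F p) volume := by
    intro p
    apply Measurable.aestronglyMeasurable
    apply Measurable.indicator _ measurableSet_Ioc
    exact (measurable_const.mul ((measurable_from_top (f := fun i : ℕ =>
      (dimF (α*(p:ℝ) - β*(i:ℝ)) i : ℝ))).comp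
      (Nat.measurable_floor.comp (measurable_const.mul measurable_id))))
  have hbound' : ∀ᶠ p : ℕ in atTop, ∀ᵐ t : ℝ, ‖F p t‖ ≤ bound t := by
    filter_upwards [eventually_ge_atTop 1] with p hp
    apply ae_of_all
    intro t
    have hp0 : (0:ℝ) < p := by exact_mod_cast hp
    have hp1 : (1:ℝ) ≤ p := by exact_mod_cast hp
    by_cases hmem : t ∈ Set.Ioc (0:ℝ) (((N p:ℝ)+1)/p)
    · have hFt : F p t = (Nat.factorial (m+1) : ℝ)/(p:ℝ)^(m+1) * (p:ℝ) *
          (dimF (α*(p:ℝ) - β*((⌊(p:ℝ)*t⌋₊:ℕ):ℝ)) ⌊(p:ℝ)*t⌋₊ : ℝ) := by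
        rw [hFdef]; exact Set.indicator_of_mem hmem _
      have ht0 : 0 < t := hmem.1
      have hNp : ((N p : ℝ)) ≤ T * p := by
        rw [hN]
        exact le_of_le_of_eq (Nat.floor_le (by positivity)) (hTp p)
      have htT1 : t ≤ T + 1 := by
        have h1 : t ≤ ((N p:ℝ)+1)/p := hmem.2
        have h2 : ((N p:ℝ)+1)/p ≤ (T*(p:ℝ)+1)/p := by gcongr
        have h3 : (T*(p:ℝ)+1)/p = T + 1/p := by field_simp
        have h4 : 1/(p:ℝ) ≤ 1 := by rw [div_le_one hp0]; exact hp1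
        linarith
      have hmem2 : t ∈ Set.Ioc (0:ℝ) (T+1) := ⟨ht0, htT1⟩
      have hbt : bound t = (Nat.factorial (m+1) : ℝ) * C * t^m := by
        rw [hbdef]; exact Set.indicator_of_mem hmem2 _
      rw [hFt, hbt, Real.norm_eq_abs, abs_of_nonneg (by positivity)]
      have hd1 : (dimF (α*(p:ℝ) - β*((⌊(p:ℝ)*t⌋₊:ℕ):ℝ)) ⌊(p:ℝ)*t⌋₊ : ℝ)
          ≤ C * ((⌊(p:ℝ)*t⌋₊:ℕ):ℝ)^m :=
        le_trans (by exact_mod_cast hle _ _) (hbound _)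
      have hfl : ((⌊(p:ℝ)*t⌋₊:ℕ):ℝ) ≤ (p:ℝ)*t := Nat.floor_le (by positivity)
      have hd2 : C * ((⌊(p:ℝ)*t⌋₊:ℕ):ℝ)^m ≤ C * ((p:ℝ)*t)^m :=
        mul_le_mul_of_nonneg_left (pow_le_pow_left₀ (Nat.cast_nonneg _) hfl m) hC
      have hkey : (Nat.factorial (m+1) : ℝ)/(p:ℝ)^(m+1) * (p:ℝ) * (C * ((p:ℝ)*t)^m)
          = (Nat.factorial (m+1) : ℝ) * C * t^m := by
        rw [mul_pow]
        field_simp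
        ring
      calc (Nat.factorial (m+1) : ℝ)/(p:ℝ)^(m+1) * (p:ℝ) *
            (dimF (α*(p:ℝ) - β*((⌊(p:ℝ)*t⌋₊:ℕ):ℝ)) ⌊(p:ℝ)*t⌋₊ : ℝ)
          ≤ (Nat.factorial (m+1) : ℝ)/(p:ℝ)^(m+1) * (p:ℝ) * (C * ((p:ℝ)*t)^m) :=
            mul_le_mul_of_nonneg_left (hd1.trans hd2) (by positivity)
        _ = (Nat.factorial (m+1) : ℝ) * C * t^m := hkey
    · have hFt : F p t = 0 := by rw [hFdef]; exact Set.indicator_of_notMem hmem _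
      rw [hFt, norm_zero]
      rw [hbdef]
      apply Set.indicator_nonneg
      intro y hy
      have hy0 : 0 < y := hy.1
      positivity
  have hbint : Integrable bound := by
    rw [hbdef, integrable_indicator_iff measurableSet_Ioc]
    exact (continuous_const.mul (continuous_pow m)).integrableOn_Ioc
  have hDCT : Tendsto (fun p => ∫ t, F p t) atTop (nhds (∫ t, f t)) :=
    tendsto_integral_filter_of_dominated_convergence bound
      (Eventually.of_forall hFmeas) hbound' hbint claimB
  -- identify the limit
  have hlimit : ∫ t, f t = ((m+1:ℕ):ℝ) * ∫ x in Set.Ioi c₁, vol x * α ^ (m+1) / (β + x) ^ (m+1+1) := by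
    have himg : (fun t : ℝ => α/t - β) '' Set.Ioo 0 T = Set.Ioi c₁ := by
      ext x
      simp only [Set.mem_image, Set.mem_Ioo, Set.mem_Ioi]
      constructor
      · rintro ⟨t, ⟨ht0, htT⟩, rfl⟩
        have h1 : α / T < α / t := (div_lt_div_iff_of_pos_left hαpos hT ht0).2 htT
        have h2 : α / T = β + c₁ := by rw [hTdef]; field_simp
        linarith
      · intro hx
        have hbx : (0:ℝ) < β + x := by linarith
        refine ⟨α/(β+x), ⟨div_pos hαpos hbx, ?_⟩, ?_⟩
        · rw [hTdef]
          exact div_lt_div_of_pos_left hαpos hβc (by linarith)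
        · field_simp
          ring
    have hderiv : ∀ t ∈ Set.Ioo (0:ℝ) T, HasDerivWithinAt (fun t : ℝ => α/t - β)
        (-(α/t^2)) (Set.Ioo 0 T) t := by
      intro t ht
      have h := ((hasDerivAt_inv ht.1.ne').const_mul α).sub_const β
      have h2 : HasDerivAt (fun t : ℝ => α/t - β) (-(α/t^2)) t := by
        simp only [div_eq_mul_inv]
        rw [show -(α * (t^2)⁻¹) = α * -(t^2)⁻¹ by ring]
        exact h
      exact h2.hasDerivWithinAt
    have hinj : Set.InjOn (fun t : ℝ => α/t - β) (Set.Ioo (0:ℝ) T) := by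
      intro a ha b hb hab
      simp only at hab
      have h : α/a = α/b := by linarith
      rw [div_eq_div_iff ha.1.ne' hb.1.ne'] at h
      exact (mul_left_cancel₀ (ne_of_gt hαpos) h).symm
    rw [hfdef, integral_indicator measurableSet_Ioo, ← himg,
      integral_image_eq_integral_abs_deriv_smul measurableSet_Ioo hderiv hinj,
      ← integral_const_mul]
    apply setIntegral_congr_fun measurableSet_Ioo
    intro t ht
    dsimp only
    have ht0 : (0:ℝ) < t := ht.1
    have e0 : |(-(α/t^2))| = α/t^2 := by
      rw [abs_neg, abs_of_pos (by positivity)]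
    have e1 : β + (α/t - β) = α/t := by ring
    rw [smul_eq_mul, e0, e1]
    rw [div_pow]
    push_cast
    field_simp
    ring
  have final : Tendsto (fun p : ℕ =>
      (Nat.factorial (m+1) : ℝ) / (p : ℝ) ^ (m+1) *
        ∑ i ∈ Finset.range (N p + 1), (dimF (α * (p : ℝ) - β * (i : ℝ)) i : ℝ))
      atTop (nhds (∫ t, f t)) := by
    apply Tendsto.congr' _ hDCT
    filter_upwards [eventually_ge_atTop 1] with p hp
    exact (claimA p hp).symm
  rw [hlimit] at final
  exact final
end

section
/- Let 𝓕 be a good filtration on R = ⊕ R_k and define the function G_𝓕(x) = sup { t > 0 : x ∈ Δ^t } on the Okounkov body Δ⁰, where Δ^t is the Okounkov body of the graded subalgebra R^{(t)} = ⊕_k 𝓕^{kt} R_k. Then, with H_𝓕 = 1/G_𝓕, the covolume of the convex set Γ = closure of ⋃_{t>0} t^{−1}({1} × Δ^t) inside the Okounkov cone satisfies covol(Γ) = (1/n) ∫_{Δ⁰} H_𝓕(x)^n dx. -/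
open MeasureTheory Pointwise

/-- Covolume formula via Okounkov bodies: let `Δ^t ⊂ ℝ^{n−1}` (`t > 0`) be the Okounkov
bodies of the filtered subalgebras, decreasing in `t`, equal to `Δ⁰` for `t ≤ c₁` and
empty for large `t`.  With `H_𝓕(x) = (sup{t > 0 : x ∈ Δ^t})⁻¹`, the coconvex set
`Γ = closure ⋃_{t>0} t⁻¹({1} × Δ^t)` inside the Okounkov cone
`𝓒 = {(τ, τx) : τ ≥ 0, x ∈ Δ⁰}` has covolume `covol(Γ) = (1/n) ∫_{Δ⁰} H_𝓕(x)ⁿ dx`. -/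
theorem covolume_eq_integral_H_pow (n : ℕ) (hn : 1 ≤ n) (c₁ : ℝ) (hc₁ : 0 < c₁)
    (Δ : ℝ → Set (EuclideanSpace ℝ (Fin (n - 1))))
    (hconv : ∀ t : ℝ, Convex ℝ (Δ t)) (hcpt : ∀ t : ℝ, IsCompact (Δ t))
    (hanti : ∀ s t : ℝ, s ≤ t → Δ t ⊆ Δ s)
    (hfull : ∀ t : ℝ, t ≤ c₁ → Δ t = Δ 0)
    (hempty : ∃ T : ℝ, ∀ t : ℝ, T ≤ t → Δ t = ∅)
    (H : EuclideanSpace ℝ (Fin (n - 1)) → ℝ)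
    (hH : ∀ x, H x = (sSup {t : ℝ | 0 < t ∧ x ∈ Δ t})⁻¹)
    (C Γ : Set (ℝ × EuclideanSpace ℝ (Fin (n - 1))))
    (hC : C = {p | ∃ τ : ℝ, 0 ≤ τ ∧ ∃ x ∈ Δ 0, p = (τ, τ • x)})
    (hΓ : Γ = closure (⋃ t ∈ Set.Ioi (0 : ℝ), (fun y => (t⁻¹, t⁻¹ • y)) '' Δ t)) :
    (volume (C \ Γ)).toReal = (1 / n) * ∫ x in Δ 0, H x ^ n := by
  classical
  obtain ⟨T, hT⟩ := hempty
  set G : EuclideanSpace ℝ (Fin (n - 1)) → ℝ :=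
    fun x => sSup {t : ℝ | 0 < t ∧ x ∈ Δ t} with hGdef
  have hHG : ∀ x, H x = (G x)⁻¹ := fun x => hH x
  have hsub0 : ∀ t : ℝ, 0 ≤ t → Δ t ⊆ Δ 0 := fun t ht => hanti 0 t ht
  have hbdd : ∀ x, BddAbove {t : ℝ | 0 < t ∧ x ∈ Δ t} := by
    intro x
    refine ⟨T, fun t ht => ?_⟩
    by_contra h
    push_neg at h
    have h2 := ht.2
    rw [hT t h.le] at h2
    exact h2
  -- characterization of `u ≤ G x`
  have hGchar : ∀ x u, 0 < u → (u ≤ G x ↔ ∀ s, 0 < s → s < u → x ∈ Δ s) := by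
    intro x u hu
    constructor
    · intro hle s hs0 hsu
      have hne : {t : ℝ | 0 < t ∧ x ∈ Δ t}.Nonempty := by
        by_contra h
        rw [Set.not_nonempty_iff_eq_empty] at h
        rw [hGdef] at hle
        simp only [h, Real.sSup_empty] at hle
        linarith
      obtain ⟨t, ht, hst⟩ := exists_lt_of_lt_csSup hne (lt_of_lt_of_le hsu hle)
      exact hanti s t hst.le ht.2
    · intro h
      refine le_of_forall_lt fun c hc => ?_
      obtain ⟨s, hs1, hs2⟩ := exists_between (show max c 0 < u from max_lt hc hu)
      have hs0 : 0 < s := lt_of_le_of_lt (le_max_right c 0) hs1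
      have hmem : s ∈ {t : ℝ | 0 < t ∧ x ∈ Δ t} := ⟨hs0, h s hs0 hs2⟩
      exact lt_of_le_of_lt (le_max_left c 0) (lt_of_lt_of_le hs1 (le_csSup (hbdd x) hmem))
  have hGc₁ : ∀ x ∈ Δ 0, c₁ ≤ G x := by
    intro x hx
    refine le_csSup (hbdd x) ⟨hc₁, ?_⟩
    rw [hfull c₁ le_rfl]
    exact hx
  have hGpos : ∀ x ∈ Δ 0, 0 < G x := fun x hx => lt_of_lt_of_le hc₁ (hGc₁ x hx)
  have hHpos : ∀ x ∈ Δ 0, 0 < H x := by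
    intro x hx
    rw [hHG x]
    exact inv_pos.mpr (hGpos x hx)
  set B : ℝ → Set (EuclideanSpace ℝ (Fin (n - 1))) := fun u => {x | u ≤ G x} with hBdef
  have hBsub : ∀ u, 0 < u → ∀ s, 0 < s → s < u → B u ⊆ Δ s :=
    fun u hu s hs hsu x hx => (hGchar x u hu).1 hx s hs hsu
  have hBsub0 : ∀ u, 0 < u → B u ⊆ Δ 0 := by
    intro u hu
    refine (hBsub u hu (u/2) (by linarith) (by linarith)).trans (hsub0 (u/2) (by linarith))
  have hΔsubB : ∀ u, 0 < u → Δ u ⊆ B u := by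
    intro u hu x hx
    exact le_csSup (hbdd x) ⟨hu, hx⟩
  have hBmeas : ∀ u, 0 < u → MeasurableSet (B u) := by
    intro u hu
    have : B u = ⋂ (q : ℚ) (_ : 0 < (q : ℝ) ∧ (q : ℝ) < u), Δ (q : ℝ) := by
      ext x
      simp only [Set.mem_iInter]
      constructor
      · intro hx q hq
        exact hBsub u hu q hq.1 hq.2 hx
      · intro hx
        refine (hGchar x u hu).2 fun s hs0 hsu => ?_
        obtain ⟨q, hq1, hq2⟩ := exists_rat_btwn hsu
        exact hanti s q hq1.le (hx q ⟨lt_trans hs0 hq1, hq2⟩)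
    rw [this]
    exact MeasurableSet.iInter fun q => MeasurableSet.iInter fun _ => (hcpt _).measurableSet
  -- the antitone volume function
  set F : ℝ → ℝ := fun t => (volume (Δ t)).toReal with hFdef
  have hFanti : Antitone F := fun s t hst =>
    ENNReal.toReal_mono (hcpt s).measure_lt_top.ne (measure_mono (hanti s t hst))
  have hvolΔ : ∀ t : ℝ, volume (Δ t) = ENNReal.ofReal (F t) :=
    fun t => (ENNReal.ofReal_toReal (hcpt t).measure_lt_top.ne).symm
  have hvolB : ∀ u, 0 < u → ContinuousAt F u → volume (B u) = volume (Δ u) := by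
    intro u hu hcont
    set sk : ℕ → ℝ := fun k => u - u / (k + 2) with hskdef
    have hk2 : ∀ k : ℕ, (1 : ℝ) < (k : ℝ) + 2 := by
      intro k
      have : (0 : ℝ) ≤ (k : ℝ) := Nat.cast_nonneg k
      linarith
    have hsklt : ∀ k, sk k < u := by
      intro k
      have : 0 < u / ((k : ℝ) + 2) := div_pos hu (by linarith [hk2 k])
      simp only [hskdef]
      linarith
    have hsk0 : ∀ k, 0 < sk k := by
      intro k
      have : u / ((k : ℝ) + 2) < u := div_lt_self hu (hk2 k)
      simp only [hskdef]
      linarith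
    have hmono : Monotone sk := by
      intro k l hkl
      simp only [hskdef]
      have h1 : u / ((l : ℝ) + 2) ≤ u / ((k : ℝ) + 2) := by
        apply div_le_div_of_nonneg_left hu.le (by linarith [hk2 k])
        have : (k : ℝ) ≤ (l : ℝ) := Nat.cast_le.mpr hkl
        linarith
      linarith
    have htend : Filter.Tendsto sk Filter.atTop (nhds u) := by
      have h1 : Filter.Tendsto (fun k : ℕ => u / ((k : ℝ) + 2)) Filter.atTop (nhds 0) := by
        have := (tendsto_const_div_atTop_nhds_zero_nat u).comp
          (Filter.tendsto_add_atTop_nat 2)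
        convert this using 2 with k
        simp [Function.comp]
      have := Filter.Tendsto.const_sub u h1
      simpa using this
    have hBeq : B u = ⋂ k, Δ (sk k) := by
      ext x
      simp only [Set.mem_iInter]
      constructor
      · intro hx k
        exact hBsub u hu (sk k) (hsk0 k) (hsklt k) hx
      · intro hx
        refine (hGchar x u hu).2 fun s hs0 hsu => ?_
        obtain ⟨k, hk⟩ := (htend.eventually (eventually_gt_nhds hsu)).exists
        exact hanti s (sk k) hk.le (hx k)
      
    have h1 : Filter.Tendsto (fun k => volume (Δ (sk k))) Filter.atTop
        (nhds (volume (⋂ k, Δ (sk k)))) :=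
      tendsto_measure_iInter_atTop
        (fun k => (hcpt _).measurableSet.nullMeasurableSet)
        (fun k l hkl => hanti _ _ (hmono hkl)) ⟨0, (hcpt _).measure_lt_top.ne⟩
    have h2 : Filter.Tendsto (fun k => volume (Δ (sk k))) Filter.atTop
        (nhds (volume (Δ u))) := by
      simp only [hvolΔ]
      exact (ENNReal.continuous_ofReal.tendsto _).comp (hcont.tendsto.comp htend)
    rw [hBeq]
    exact tendsto_nhds_unique h1 h2
  -- countable set of bad parameters
  have hNc : Set.Countable {u : ℝ | ¬ContinuousAt F u} := hFanti.countable_not_continuousAt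
  set badset : Set ℝ := (fun u : ℝ => u⁻¹) '' {u : ℝ | ¬ContinuousAt F u} with hbaddef
  have hbadnull : volume badset = 0 := (hNc.image _).measure_zero _
  -- the cone map
  set φ : ℝ × EuclideanSpace ℝ (Fin (n - 1)) → ℝ × EuclideanSpace ℝ (Fin (n - 1)) :=
    fun p => (p.1, p.1 • p.2) with hφdef
  have hφc : Continuous φ := continuous_fst.prodMk (continuous_fst.smul continuous_snd)
  have hCeq : C = ⋃ m : ℕ, φ '' (Set.Icc (0 : ℝ) m ×ˢ Δ 0) := by
    rw [hC]
    ext p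
    simp only [Set.mem_iUnion, Set.mem_image, Set.mem_prod, Set.mem_Icc, Set.mem_setOf_eq,
      Prod.exists, hφdef]
    constructor
    · rintro ⟨τ, hτ, x, hx, rfl⟩
      obtain ⟨m, hm⟩ := exists_nat_ge τ
      exact ⟨m, τ, x, ⟨⟨hτ, hm⟩, hx⟩, rfl⟩
    · rintro ⟨m, a, x, ⟨⟨ha0, _⟩, hx⟩, rfl⟩
      exact ⟨a, ha0, x, hx, rfl⟩
  have hCmeas : MeasurableSet C := by
    rw [hCeq]
    exact MeasurableSet.iUnion fun m =>
      (((isCompact_Icc.prod (hcpt 0)).image hφc).isClosed).measurableSet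
  have hΓmeas : MeasurableSet Γ := by
    rw [hΓ]
    exact isClosed_closure.measurableSet
  have hDmeas : MeasurableSet (C \ Γ) := hCmeas.diff hΓmeas
  -- slices of C
  have hsliceC : ∀ τ : ℝ, 0 ≤ τ → Prod.mk τ ⁻¹' C = τ • Δ 0 := by
    intro τ hτ
    rw [hC]
    ext y
    simp only [Set.mem_preimage, Set.mem_setOf_eq, Set.mem_smul_set, Prod.mk.injEq]
    constructor
    · rintro ⟨τ', hτ', x, hx, h1, h2⟩
      exact ⟨x, hx, by rw [h1]; exact h2.symm⟩
    · rintro ⟨x, hx, rfl⟩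
      exact ⟨τ, hτ, x, hx, rfl, rfl⟩
  have hsliceCneg : ∀ τ : ℝ, τ < 0 → Prod.mk τ ⁻¹' C = ∅ := by
    intro τ hτ
    rw [hC]
    ext y
    simp only [Set.mem_preimage, Set.mem_setOf_eq, Set.mem_empty_iff_false, iff_false, not_exists,
      Prod.mk.injEq]
    rintro τ' ⟨hτ', x, hx, h1, h2⟩
    rw [h1] at hτ
    exact absurd hτ' (not_le.mpr hτ)
  -- lower bound for the slice of Γ
  have hΓlow : ∀ τ : ℝ, 0 < τ → τ • Δ τ⁻¹ ⊆ Prod.mk τ ⁻¹' Γ := by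
    rintro τ hτ y ⟨x, hx, rfl⟩
    rw [hΓ]
    apply subset_closure
    simp only [Set.mem_iUnion, Set.mem_image, Set.mem_Ioi]
    exact ⟨τ⁻¹, inv_pos.mpr hτ, x, hx, by rw [inv_inv]⟩
  -- upper bound for the slice of Γ
  have hΓup : ∀ τ : ℝ, 0 < τ → Prod.mk τ ⁻¹' Γ ⊆ τ • B τ⁻¹ := by
    intro τ hτ y hy
    have key : ∀ s, 0 < s → s < τ⁻¹ → y ∈ τ • Δ s := by
      intro s hs hsu
      have hK : IsCompact (φ '' (Set.Icc (0 : ℝ) s⁻¹ ×ˢ Δ s)) :=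
        (isCompact_Icc.prod (hcpt s)).image hφc
      have hQ : IsClosed {p : ℝ × EuclideanSpace ℝ (Fin (n - 1)) | s⁻¹ ≤ p.1} :=
        isClosed_le continuous_const continuous_fst
      have hU : (⋃ t ∈ Set.Ioi (0 : ℝ), (fun y => (t⁻¹, t⁻¹ • y)) '' Δ t) ⊆
          φ '' (Set.Icc (0 : ℝ) s⁻¹ ×ˢ Δ s) ∪ {p | s⁻¹ ≤ p.1} := by
        intro p hp
        simp only [Set.mem_iUnion, Set.mem_image, Set.mem_Ioi] at hp
        obtain ⟨t, ht, x, hx, rfl⟩ := hp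
        rcases le_or_gt s t with h | h
        · left
          exact ⟨(t⁻¹, x), ⟨⟨inv_nonneg.mpr ht.le, inv_anti₀ hs h⟩,
            hanti s t h hx⟩, rfl⟩
        · right
          exact inv_anti₀ ht h.le
      have hcl : Γ ⊆ φ '' (Set.Icc (0 : ℝ) s⁻¹ ×ˢ Δ s) ∪ {p | s⁻¹ ≤ p.1} := by
        rw [hΓ]
        exact closure_minimal hU (hK.isClosed.union hQ)
      rcases hcl hy with h | h
      · obtain ⟨⟨a, x⟩, ⟨⟨ha, _⟩, hxs⟩, heq⟩ := h
        rw [hφdef, Prod.ext_iff] at heq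
        obtain ⟨h1, h2⟩ := heq
        refine ⟨x, hxs, ?_⟩
        simp only at h1 h2
        rw [← h1]
        exact h2
      · exact absurd h (not_le.mpr ((lt_inv_comm₀ hs hτ).mp hsu))
    have hx0 : ∀ s, 0 < s → s < τ⁻¹ → τ⁻¹ • y ∈ Δ s := by
      intro s hs hsu
      obtain ⟨x, hx, rfl⟩ := key s hs hsu
      rwa [inv_smul_smul₀ hτ.ne']
    refine ⟨τ⁻¹ • y, ?_, smul_inv_smul₀ hτ.ne' y⟩
    exact (hGchar _ _ (inv_pos.mpr hτ)).2 hx0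
  -- dimension / scaling
  have hd : Module.finrank ℝ (EuclideanSpace ℝ (Fin (n - 1))) = n - 1 :=
    finrank_euclideanSpace_fin
  have hsmulvol : ∀ τ : ℝ, 0 < τ → ∀ s : Set (EuclideanSpace ℝ (Fin (n - 1))),
      volume (τ • s) = ENNReal.ofReal (τ ^ (n - 1)) * volume s := by
    intro τ hτ s
    rw [Measure.addHaar_smul, hd, abs_of_nonneg (pow_nonneg hτ.le _)]
  -- the volume of a good slice
  have hslicevol : ∀ τ : ℝ, 0 < τ → ContinuousAt F τ⁻¹ →
      volume (Prod.mk τ ⁻¹' (C \ Γ)) = ENNReal.ofReal (τ ^ (n - 1)) * volume (Δ 0 \ B τ⁻¹) := by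
    intro τ hτ hcont
    have hu : 0 < τ⁻¹ := inv_pos.mpr hτ
    have hBu := hvolB τ⁻¹ hu hcont
    have hpre : Prod.mk τ ⁻¹' (C \ Γ) = (τ • Δ 0) \ (Prod.mk τ ⁻¹' Γ) := by
      rw [Set.preimage_diff, hsliceC τ hτ.le]
    have hup : volume (Prod.mk τ ⁻¹' (C \ Γ)) ≤
        ENNReal.ofReal (τ ^ (n - 1)) * volume (Δ 0 \ Δ τ⁻¹) := by
      rw [hpre, ← hsmulvol τ hτ, Set.smul_set_sdiff₀ hτ.ne']
      exact measure_mono (Set.diff_subset_diff_right (hΓlow τ hτ))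
    have hlow : ENNReal.ofReal (τ ^ (n - 1)) * volume (Δ 0 \ B τ⁻¹) ≤
        volume (Prod.mk τ ⁻¹' (C \ Γ)) := by
      rw [hpre, ← hsmulvol τ hτ, Set.smul_set_sdiff₀ hτ.ne']
      exact measure_mono (Set.diff_subset_diff_right (hΓup τ hτ))
    have hBfin : volume (B τ⁻¹) ≠ ⊤ :=
      (lt_of_le_of_lt (measure_mono (hBsub0 _ hu)) (hcpt 0).measure_lt_top).ne
    have h1 : volume (Δ 0 \ Δ τ⁻¹) = volume (Δ 0) - volume (Δ τ⁻¹) :=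
      measure_diff (hsub0 _ hu.le) (hcpt _).measurableSet.nullMeasurableSet
        (hcpt _).measure_lt_top.ne
    have h2 : volume (Δ 0 \ B τ⁻¹) = volume (Δ 0) - volume (B τ⁻¹) :=
      measure_diff (hBsub0 _ hu) (hBmeas _ hu).nullMeasurableSet hBfin
    have heq : volume (Δ 0 \ Δ τ⁻¹) = volume (Δ 0 \ B τ⁻¹) := by
      rw [h1, h2, hBu]
    exact le_antisymm (hup.trans_eq (by rw [heq])) hlow
  -- Fubini
  have hfub : volume (C \ Γ) = ∫⁻ τ, volume (Prod.mk τ ⁻¹' (C \ Γ)) := by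
    rw [MeasureTheory.Measure.volume_eq_prod, Measure.prod_apply hDmeas]
  have hIic : ∫⁻ τ in Set.Iic (0 : ℝ), volume (Prod.mk τ ⁻¹' (C \ Γ)) = 0 := by
    have h0 : ∀ᵐ τ : ℝ, τ ≠ 0 := by
      rw [MeasureTheory.ae_iff]
      simpa only [not_not, Set.setOf_eq_eq_singleton] using measure_singleton (0 : ℝ)
    have hae : ∀ᵐ τ ∂(volume.restrict (Set.Iic (0 : ℝ))),
        volume (Prod.mk τ ⁻¹' (C \ Γ)) = (fun _ => (0 : ENNReal)) τ := by
      filter_upwards [self_mem_ae_restrict measurableSet_Iic, ae_restrict_of_ae h0]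
        with τ h1 h2
      have hτ : τ < 0 := lt_of_le_of_ne h1 h2
      rw [Set.preimage_diff, hsliceCneg τ hτ]
      simp
    rw [lintegral_congr_ae hae, lintegral_zero]
  have hsplit : volume (C \ Γ) = ∫⁻ τ in Set.Ioi (0 : ℝ), volume (Prod.mk τ ⁻¹' (C \ Γ)) := by
    rw [hfub, ← lintegral_add_compl _ measurableSet_Ioi (μ := volume), Set.compl_Ioi, hIic,
      add_zero]
  have hmain : ∫⁻ τ in Set.Ioi (0 : ℝ), volume (Prod.mk τ ⁻¹' (C \ Γ)) =
      ∫⁻ τ in Set.Ioi (0 : ℝ), volume (Δ 0 \ B τ⁻¹) * ENNReal.ofReal (τ ^ (n - 1)) := by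
    apply lintegral_congr_ae
    have hbad : ∀ᵐ τ : ℝ, τ ∉ badset := by
      rw [MeasureTheory.ae_iff]
      simpa only [not_not, Set.setOf_mem_eq] using hbadnull
    filter_upwards [self_mem_ae_restrict measurableSet_Ioi, ae_restrict_of_ae hbad]
      with τ h1 h2
    have hτ : (0 : ℝ) < τ := h1
    have hcont : ContinuousAt F τ⁻¹ := by
      by_contra hcontra
      exact h2 ⟨τ⁻¹, hcontra, inv_inv τ⟩
    rw [hslicevol τ hτ hcont, mul_comm]
  -- identify the sets with sublevel sets of H
  set μ := volume.restrict (Δ 0) with hμdef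
  have hsetH : ∀ τ : ℝ, 0 < τ → {a | τ < H a} ∩ Δ 0 = Δ 0 \ B τ⁻¹ := by
    intro τ hτ
    ext x
    simp only [Set.mem_inter_iff, Set.mem_setOf_eq, Set.mem_diff]
    constructor
    · rintro ⟨hHx, hx0⟩
      refine ⟨hx0, fun hB => ?_⟩
      rw [hHG x] at hHx
      have hlt : G x < τ⁻¹ := (lt_inv_comm₀ hτ (hGpos x hx0)).mp hHx
      exact absurd hB (not_le.mpr hlt)
    · rintro ⟨hx0, hB⟩
      have hlt : G x < τ⁻¹ := not_le.mp hB
      refine ⟨?_, hx0⟩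
      rw [hHG x]
      exact (lt_inv_comm₀ hτ (hGpos x hx0)).mpr hlt
  have hres : ∀ τ : ℝ, 0 < τ → μ {a | τ < H a} = volume (Δ 0 \ B τ⁻¹) := by
    intro τ hτ
    rw [hμdef, Measure.restrict_apply' (hcpt 0).measurableSet, hsetH τ hτ]
  -- measurability of H
  have hHmeas : AEMeasurable H μ := by
    set H' : EuclideanSpace ℝ (Fin (n - 1)) → ℝ :=
      fun x => if x ∈ Δ 0 then H x else 0 with hH'def
    have hmeasH' : Measurable H' := by
      apply measurable_of_Ioi
      intro τ
      rcases lt_trichotomy τ 0 with hτ | hτ | hτ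
      · have : H' ⁻¹' Set.Ioi τ = Set.univ := by
          ext x
          simp only [Set.mem_preimage, Set.mem_Ioi, Set.mem_univ, iff_true, hH'def]
          by_cases hx : x ∈ Δ 0
          · rw [if_pos hx]; exact lt_of_lt_of_le hτ (hHpos x hx).le
          · rw [if_neg hx]; exact hτ
        rw [this]; exact MeasurableSet.univ
      · have : H' ⁻¹' Set.Ioi τ = Δ 0 := by
          subst hτ
          ext x
          simp only [Set.mem_preimage, Set.mem_Ioi, hH'def]
          by_cases hx : x ∈ Δ 0
          · rw [if_pos hx]; exact ⟨fun _ => hx, fun _ => hHpos x hx⟩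
          · rw [if_neg hx]; exact ⟨fun h => absurd h (lt_irrefl 0), fun h => absurd h hx⟩
        rw [this]; exact (hcpt 0).measurableSet
      · have : H' ⁻¹' Set.Ioi τ = Δ 0 \ B τ⁻¹ := by
          rw [← hsetH τ hτ]
          ext x
          simp only [Set.mem_preimage, Set.mem_Ioi, Set.mem_inter_iff, Set.mem_setOf_eq, hH'def]
          by_cases hx : x ∈ Δ 0
          · rw [if_pos hx]; exact ⟨fun h => ⟨h, hx⟩, fun h => h.1⟩
          · rw [if_neg hx]
            exact ⟨fun h => absurd hτ (not_lt.mpr h.le), fun h => absurd h.2 hx⟩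
        rw [this]
        exact (hcpt 0).measurableSet.diff (hBmeas _ (inv_pos.mpr hτ))
    have hae : H' =ᵐ[μ] H := by
      filter_upwards [self_mem_ae_restrict (hcpt 0).measurableSet] with x hx
      simp only [hH'def, if_pos hx]
    exact hmeasH'.aemeasurable.congr hae
  have hnn : 0 ≤ᵐ[μ] H := by
    filter_upwards [self_mem_ae_restrict (hcpt 0).measurableSet] with x hx
    exact (hHpos x hx).le
  have hp : (0 : ℝ) < (n : ℝ) := by exact_mod_cast Nat.lt_of_lt_of_le Nat.zero_lt_one hn
  have key := lintegral_rpow_eq_lintegral_meas_lt_mul μ hnn hHmeas hp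
  have hcast : (n : ℝ) - 1 = ((n - 1 : ℕ) : ℝ) := by
    rw [Nat.cast_sub hn, Nat.cast_one]
  rw [hcast] at key
  simp_rw [Real.rpow_natCast] at key
  -- put everything together
  have hvol : volume (C \ Γ) = (ENNReal.ofReal (n : ℝ))⁻¹ *
      ∫⁻ x, ENNReal.ofReal (H x ^ n) ∂μ := by
    rw [hsplit, hmain, key, ← mul_assoc,
      ENNReal.inv_mul_cancel (ENNReal.ofReal_pos.mpr hp).ne' ENNReal.ofReal_ne_top, one_mul]
    apply lintegral_congr_ae
    filter_upwards [self_mem_ae_restrict measurableSet_Ioi] with τ hτ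
    rw [hres τ hτ]
  have hint : ∫ x in Δ 0, H x ^ n = (∫⁻ x, ENNReal.ofReal (H x ^ n) ∂μ).toReal := by
    rw [hμdef]
    apply integral_eq_lintegral_of_nonneg_ae
    · filter_upwards [self_mem_ae_restrict (hcpt 0).measurableSet] with x hx
      exact pow_nonneg (hHpos x hx).le n
    · exact ((hHmeas.pow_const n).aestronglyMeasurable)
  rw [hvol, ENNReal.toReal_mul, ENNReal.toReal_inv, ENNReal.toReal_ofReal hp.le, hint, one_div]
end

section
/- Define a sequence of polynomials in ℂ[x,y] by q₀ = y, q₁ = x, and q_{i+1} = q_i^{c_i} + y^{β_i c_i}, where β₁ > 1 is rational, c_i > 1 are pairwise coprime positive integers with c_i β_i ∈ ℤ and c_i minimal such, and β_{i+1} > c_i β_i. Set d₁ = 1 and d_i = c₁c₂⋯c_{i−1} for i ≥ 2. Then for every i ≥ 1, the lowest-degree homogeneous component of q_i (with respect to total degree, with ord₀-grading where y has degree 1 and x has degree 1) is x^{d_i}, and ord₀(q_i) = d_i. -/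
open MvPolynomial

private def IsInit (P : MvPolynomial (Fin 2) ℂ) (a : ℕ) : Prop :=
  MvPolynomial.coeff (Finsupp.single (0 : Fin 2) a) P = 1 ∧
    ∀ m ∈ P.support, m ≠ Finsupp.single (0 : Fin 2) a → a < m 0 + m 1

private lemma deg_single (a : ℕ) :
    (Finsupp.single (0 : Fin 2) a) 0 + (Finsupp.single (0 : Fin 2) a) 1 = a := by
  simp

private lemma IsInit.deg_le {P : MvPolynomial (Fin 2) ℂ} {a : ℕ} (h : IsInit P a)
    {m : Fin 2 →₀ ℕ} (hm : m ∈ P.support) : a ≤ m 0 + m 1 := by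
  rcases eq_or_ne m (Finsupp.single (0 : Fin 2) a) with rfl | hne
  · simp
  · exact (h.2 m hm hne).le

private lemma IsInit.mul {P Q : MvPolynomial (Fin 2) ℂ} {a b : ℕ}
    (hP : IsInit P a) (hQ : IsInit Q b) : IsInit (P * Q) (a + b) := by
  have hsab : (Finsupp.single (0 : Fin 2) (a + b))
      = Finsupp.single (0 : Fin 2) a + Finsupp.single (0 : Fin 2) b :=
    Finsupp.single_add 0 a b
  constructor
  · rw [MvPolynomial.coeff_mul]
    rw [Finset.sum_eq_single (Finsupp.single (0 : Fin 2) a, Finsupp.single (0 : Fin 2) b)]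
    · rw [hP.1, hQ.1, one_mul]
    · rintro ⟨u, v⟩ hmem hne
      rw [Finset.HasAntidiagonal.mem_antidiagonal] at hmem
      by_contra h0
      have hu : u ∈ P.support :=
        MvPolynomial.mem_support_iff.2 (fun h => h0 (by simp [h]))
      have hv : v ∈ Q.support :=
        MvPolynomial.mem_support_iff.2 (fun h => h0 (by simp [h]))
      have h0' := congrArg (fun f : Fin 2 →₀ ℕ => f 0) hmem
      have h1' := congrArg (fun f : Fin 2 →₀ ℕ => f 1) hmem
      simp [Finsupp.add_apply] at h0' h1'
      rcases eq_or_ne u (Finsupp.single (0 : Fin 2) a) with rfl | hua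
      · have hvb : v = Finsupp.single (0 : Fin 2) b :=
          add_left_cancel (hmem.trans hsab)
        exact hne (by rw [hvb])
      · have hgt1 := hP.2 u hu hua
        rcases eq_or_ne v (Finsupp.single (0 : Fin 2) b) with rfl | hvb
        · simp at h0' h1'; omega
        · have hgt2 := hQ.2 v hv hvb
          omega
    · intro hns
      exact absurd (Finset.HasAntidiagonal.mem_antidiagonal.2 hsab.symm) hns
  · intro m hm hne
    have hmem := MvPolynomial.support_mul P Q hm
    rw [Finset.mem_add] at hmem
    obtain ⟨u, hu, v, hv, rfl⟩ := hmem
    have h1 := hP.deg_le hu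
    have h2 := hQ.deg_le hv
    have hdm : (u + v) 0 + (u + v) 1 = (u 0 + u 1) + (v 0 + v 1) := by
      simp [Finsupp.add_apply]; ring
    rw [hdm]
    rcases eq_or_ne u (Finsupp.single (0 : Fin 2) a) with rfl | hua
    · have hvb : v ≠ Finsupp.single (0 : Fin 2) b := fun h => hne (by rw [h, ← hsab])
      have := hQ.2 v hv hvb
      have hda := deg_single a
      omega
    · have := hP.2 u hu hua
      omega

private lemma IsInit.pow {P : MvPolynomial (Fin 2) ℂ} {a : ℕ} (hP : IsInit P a) :
    ∀ n, 1 ≤ n → IsInit (P ^ n) (a * n) := by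
  intro n hn
  induction n with
  | zero => omega
  | succ k ih =>
    rcases Nat.eq_or_lt_of_le hn with h | h
    · simpa [← h] using hP
    · have hk : 1 ≤ k := by omega
      have heq : a * (k + 1) = a * k + a := by ring
      rw [pow_succ, heq]
      exact (ih hk).mul hP

private lemma IsInit.add_high {P Q : MvPolynomial (Fin 2) ℂ} {a : ℕ}
    (hP : IsInit P a)
    (hQc : MvPolynomial.coeff (Finsupp.single (0 : Fin 2) a) Q = 0)
    (hQd : ∀ m ∈ Q.support, a < m 0 + m 1) : IsInit (P + Q) a := by
  constructor
  · rw [MvPolynomial.coeff_add, hP.1, hQc, add_zero]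
  · intro m hm hne
    rw [MvPolynomial.mem_support_iff, MvPolynomial.coeff_add] at hm
    rcases eq_or_ne (MvPolynomial.coeff m Q) 0 with h | h
    · have : MvPolynomial.coeff m P ≠ 0 := by
        intro h'; exact hm (by rw [h, h', add_zero])
      exact hP.2 m (MvPolynomial.mem_support_iff.2 this) hne
    · exact hQd m (MvPolynomial.mem_support_iff.2 h)

/-- Key polynomials `q₀ = y`, `q₁ = x`, `q_{i+1} = q_i^{c_i} + y^{β_i c_i}` in `ℂ[x,y]`,
where `β₁ > 1` is rational, the `c_i > 1` are pairwise coprime, `c_i β_i ∈ ℤ` with `c_i`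
minimal such, and `β_{i+1} > c_i β_i`.  With `d₁ = 1` and `d_{i+1} = d_i c_i`
(`d_i = c₁⋯c_{i−1}`), for every `i ≥ 1` the lowest-degree homogeneous component of
`q_i` is `x^{d_i}` and `ord₀(q_i) = d_i`: the coefficient of `x^{d_i}` in `q_i` is `1`,
and every other monomial in the support of `q_i` has total degree `> d_i`. -/
theorem key_polynomial_initial_component
    (c e d : ℕ → ℕ) (β : ℕ → ℚ) (q : ℕ → MvPolynomial (Fin 2) ℂ)
    (hc : ∀ i ≥ 1, 1 < c i)
    (hcop : ∀ i j : ℕ, 1 ≤ i → 1 ≤ j → i ≠ j → Nat.Coprime (c i) (c j))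
    (hβ1 : 1 < β 1)
    (hβint : ∀ i ≥ 1, (e i : ℚ) = (c i : ℚ) * β i)
    (hcmin : ∀ i ≥ 1, ∀ m : ℕ, 0 < m → (∃ z : ℤ, (m : ℚ) * β i = (z : ℚ)) → c i ≤ m)
    (hβgrow : ∀ i ≥ 1, (c i : ℚ) * β i < β (i + 1))
    (hq0 : q 0 = X 1) (hq1 : q 1 = X 0)
    (hq : ∀ i ≥ 1, q (i + 1) = q i ^ c i + X 1 ^ e i)
    (hd1 : d 1 = 1) (hd : ∀ i ≥ 1, d (i + 1) = d i * c i) :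
    ∀ i ≥ 1,
      MvPolynomial.coeff (Finsupp.single (0 : Fin 2) (d i)) (q i) = 1 ∧
        ∀ m ∈ (q i).support, m ≠ Finsupp.single (0 : Fin 2) (d i) →
          d i < m 0 + m 1 := by
  suffices h : ∀ i, 1 ≤ i → IsInit (q i) (d i) ∧ (d i : ℚ) < β i ∧ 1 ≤ d i by
    intro i hi; exact (h i hi).1
  intro i hi
  induction i with
  | zero => omega
  | succ k ih =>
    rcases Nat.eq_or_lt_of_le hi with h1 | h1
    · -- k + 1 = 1
      have hk0 : k = 0 := by omega
      subst hk0
      refine ⟨⟨?_, ?_⟩, by rw [hd1]; exact_mod_cast hβ1, by rw [hd1]⟩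
      · rw [hq1, hd1]
        exact MvPolynomial.coeff_X_same 0
      · intro m hm hne
        rw [hq1, MvPolynomial.support_X] at hm
        simp at hm
        rw [hd1] at hne
        exact absurd hm hne
    · -- k ≥ 1
      have hk : 1 ≤ k := by omega
      obtain ⟨hIk, hβk, hdk1⟩ := ih hk
      have hck := hc k hk
      have hqk := hq k hk
      have hdk := hd k hk
      have hek := hβint k hk
      have hgrow := hβgrow k hk
      have hc0 : (0 : ℚ) < (c k : ℚ) := by
        exact_mod_cast Nat.lt_of_lt_of_le Nat.zero_lt_one hck.le
      have hdlt : (d (k + 1) : ℚ) < (e k : ℚ) := by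
        rw [hdk, hek]
        push_cast
        calc (d k : ℚ) * (c k : ℚ) < β k * (c k : ℚ) :=
              mul_lt_mul_of_pos_right hβk hc0
          _ = (c k : ℚ) * β k := by ring
      have hdk1_lt_ek : d (k + 1) < e k := by exact_mod_cast hdlt
      have hdpos : 1 ≤ d (k + 1) := by
        rw [hdk]; exact Nat.one_le_iff_ne_zero.2 (Nat.mul_ne_zero (by omega) (by omega))
      have hpow : IsInit (q k ^ c k) (d (k + 1)) := by
        rw [hdk]
        exact hIk.pow (c k) (by omega)
      have hsupp : ((X 1 : MvPolynomial (Fin 2) ℂ) ^ e k).support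
          = {Finsupp.single (1 : Fin 2) (e k)} := MvPolynomial.support_X_pow 1 (e k)
      refine ⟨?_, ?_, hdpos⟩
      · rw [hqk]
        refine hpow.add_high ?_ ?_
        · rw [← MvPolynomial.notMem_support_iff]
          intro hmem
          rw [hsupp, Finset.mem_singleton] at hmem
          have := congrArg (fun f : Fin 2 →₀ ℕ => f 1) hmem
          simp at this
          omega
        · intro m hm
          rw [hsupp, Finset.mem_singleton] at hm
          subst hm
          simp
          omega
      · calc (d (k + 1) : ℚ) < (e k : ℚ) := hdlt
          _ = (c k : ℚ) * β k := hek
          _ < β (k + 1) := hgrow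
end
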